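/- arXiv:2605.19083 — 2 statements merged into one kernel-verified Lean document; each statement's English description precedes it below -/
import Mathlib

section
/- Define aₙ = F(2n−1) + 1 for n ≥ 1 and a₀ = 2, where F is the Fibonacci sequence, and set dₙ = gcd(aₙ, aₙ₊₁). Then aₙ₊₁ = dₙ·dₙ₊₁ for all n ≥ 1. -/
private def Lu : ℕ → ℕ
  | 0 => 2
  | 1 => 1
  | (n+2) => Lu n + Lu (n+1)

private lemma Lu_add_two (n : ℕ) : Lu (n+2) = Lu n + Lu (n+1) := rfl

private lemma gcd_Lu (n : ℕ) : Nat.gcd (Lu n) (Lu (n+1)) = 1 := by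
  induction n with
  | zero => rfl
  | succ k ih =>
    rw [Lu_add_two, Nat.gcd_add_self_right, Nat.gcd_comm]
    exact ih

private lemma gcd_Lu_two (n : ℕ) : Nat.gcd (Lu n) (Lu (n+2)) = 1 := by
  rw [Lu_add_two, Nat.gcd_comm, Nat.gcd_self_add_left, Nat.gcd_comm]
  exact gcd_Lu n

private lemma Lu_fib (n : ℕ) : Lu n + Nat.fib n = 2 * Nat.fib (n+1) := by
  induction n using Nat.twoStepInduction with
  | zero => rfl
  | one => rfl
  | more k ih1 ih2 =>
    rw [Lu_add_two, Nat.fib_add_two, Nat.fib_add_two]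
    omega

private lemma cassini (n : ℕ) :
    (Nat.fib (n+1) : ℤ)^2 = Nat.fib n * Nat.fib (n+1) + (Nat.fib n : ℤ)^2 + (-1)^n := by
  induction n with
  | zero => simp
  | succ k ih =>
    have h : (Nat.fib (k+2) : ℤ) = Nat.fib k + Nat.fib (k+1) := by
      rw [Nat.fib_add_two]; push_cast; ring
    rw [h, pow_succ]
    linear_combination -ih

private lemma fib_two_mul_add_one (n : ℕ) :
    Nat.fib (2*n+1) = Nat.fib n * Nat.fib n + Nat.fib (n+1) * Nat.fib (n+1) := by
  have := Nat.fib_add n n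
  rw [two_mul]
  omega

private lemma factor_even (n : ℕ) (h : Even n) :
    Nat.fib (2*n+1) + 1 = Nat.fib (n+1) * Lu n := by
  have h1 := fib_two_mul_add_one n
  have h2 := Lu_fib n
  have h3 : (Nat.fib (n+1) : ℤ)^2 = Nat.fib n * Nat.fib (n+1) + (Nat.fib n : ℤ)^2 + 1 := by
    have := cassini n
    rwa [h.neg_one_pow] at this
  have h4 : Nat.fib (n+1) * Nat.fib (n+1) = Nat.fib n * Nat.fib (n+1) + Nat.fib n * Nat.fib n + 1 := by
    zify
    linear_combination h3
  have h5 : Nat.fib (n+1) * (Lu n + Nat.fib n) = Nat.fib (n+1) * (2 * Nat.fib (n+1)) := by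
    rw [h2]
  rw [mul_add] at h5
  nlinarith [h1, h4, h5]

private lemma factor_odd (n : ℕ) (h : Odd n) :
    Nat.fib (2*n+1) + 1 = Nat.fib n * Lu (n+1) := by
  have h1 := fib_two_mul_add_one n
  have h2 := Lu_fib (n+1)
  have h3 : (Nat.fib (n+1) : ℤ)^2 + 1 = Nat.fib n * Nat.fib (n+1) + (Nat.fib n : ℤ)^2 := by
    have := cassini n
    rw [h.neg_one_pow] at this
    linarith
  have h4 : Nat.fib (n+1) * Nat.fib (n+1) + 1 = Nat.fib n * Nat.fib (n+1) + Nat.fib n * Nat.fib n := by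
    zify
    linear_combination h3
  have h5 : Nat.fib n * (Lu (n+1) + Nat.fib (n+1)) = Nat.fib n * (2 * Nat.fib (n+2)) := by
    rw [h2]
  rw [mul_add, Nat.fib_add_two, Nat.mul_add, Nat.mul_add] at h5
  nlinarith [h1, h4, h5]

private lemma gcd_self_add_two (m : ℕ) (h : Odd m) : Nat.gcd m (m+2) = 1 := by
  have h1 : Nat.gcd m (m+2) ∣ 2 := by
    have := Nat.dvd_sub (Nat.gcd_dvd_right m (m+2)) (Nat.gcd_dvd_left m (m+2))
    simpa using this
  have h2 : Nat.gcd m (m+2) ∣ m := Nat.gcd_dvd_left m (m+2)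
  rcases (Nat.dvd_prime Nat.prime_two).mp h1 with h3 | h3
  · exact h3
  · exfalso
    rw [h3] at h2
    rw [Nat.odd_iff] at h
    omega

private lemma gcd_fib_add_two (m : ℕ) (h : Odd m) :
    Nat.gcd (Nat.fib m) (Nat.fib (m+2)) = 1 := by
  rw [← Nat.fib_gcd, gcd_self_add_two m h]
  rfl

theorem aseq_eq_prod_gcds (a : ℕ → ℕ) (h0 : a 0 = 2)
    (hn : ∀ n, 1 ≤ n → a n = Nat.fib (2 * n - 1) + 1)
    (d : ℕ → ℕ) (hd : ∀ n, d n = Nat.gcd (a n) (a (n + 1))) :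
    ∀ n, 1 ≤ n → a (n + 1) = d n * d (n + 1) := by
  intro n hn1
  have ha0 := hn n hn1
  have ha1 := hn (n+1) (by omega)
  have ha2 := hn (n+2) (by omega)
  rcases Nat.even_or_odd n with he | ho
  · -- n even, n ≥ 2
    have hn2 : 2 ≤ n := by
      rcases he with ⟨k, hk⟩; omega
    have hodd : Odd (n-1) := by
      rcases he with ⟨k, hk⟩; exact ⟨k-1, by omega⟩
    have hodd1 : Odd (n+1) := by
      rcases he with ⟨k, hk⟩; exact ⟨k, by omega⟩
    -- a n = fib (n-1) * Lu n
    have e0 : a n = Nat.fib (n-1) * Lu n := by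
      have := factor_odd (n-1) hodd
      have hr : 2*(n-1)+1 = 2*n-1 := by omega
      have hr2 : n-1+1 = n := by omega
      rw [hr, hr2] at this
      rw [ha0, this]
    have e1 : a (n+1) = Nat.fib (n+1) * Lu n := by
      have := factor_even n he
      have hr : 2*n+1 = 2*(n+1)-1 := by omega
      rw [hr] at this
      rw [ha1, this]
    have e2 : a (n+2) = Nat.fib (n+1) * Lu (n+2) := by
      have := factor_odd (n+1) hodd1
      have hr : 2*(n+1)+1 = 2*(n+2)-1 := by omega
      rw [hr] at this
      rw [ha2, this]
    have hdn : d n = Lu n := by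
      rw [hd, e0, e1, Nat.gcd_mul_right]
      have : Nat.gcd (Nat.fib (n-1)) (Nat.fib (n+1)) = 1 := by
        have := gcd_fib_add_two (n-1) hodd
        have hr : n-1+2 = n+1 := by omega
        rwa [hr] at this
      rw [this, one_mul]
    have hdn1 : d (n+1) = Nat.fib (n+1) := by
      rw [hd, e1, e2, Nat.gcd_mul_left, gcd_Lu_two, mul_one]
    rw [e1, hdn, hdn1, mul_comm]
  · -- n odd
    have heven : Even (n-1) := by
      rcases ho with ⟨k, hk⟩; exact ⟨k, by omega⟩
    have heven1 : Even (n+1) := by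
      rcases ho with ⟨k, hk⟩; exact ⟨k+1, by omega⟩
    have e0 : a n = Nat.fib n * Lu (n-1) := by
      have := factor_even (n-1) heven
      have hr : 2*(n-1)+1 = 2*n-1 := by omega
      have hr2 : n-1+1 = n := by omega
      rw [hr, hr2] at this
      rw [ha0, this]
    have e1 : a (n+1) = Nat.fib n * Lu (n+1) := by
      have := factor_odd n ho
      have hr : 2*n+1 = 2*(n+1)-1 := by omega
      rw [hr] at this
      rw [ha1, this]
    have e2 : a (n+2) = Nat.fib (n+2) * Lu (n+1) := by
      have := factor_even (n+1) heven1
      have hr : 2*(n+1)+1 = 2*(n+2)-1 := by omega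
      have hr2 : n+1+1 = n+2 := by omega
      rw [hr, hr2] at this
      rw [ha2, this]
    have hdn : d n = Nat.fib n := by
      rw [hd, e0, e1, Nat.gcd_mul_left]
      have : Nat.gcd (Lu (n-1)) (Lu (n+1)) = 1 := by
        have := gcd_Lu_two (n-1)
        have hr : n-1+2 = n+1 := by omega
        rwa [hr] at this
      rw [this, mul_one]
    have hdn1 : d (n+1) = Lu (n+1) := by
      rw [hd, e1, e2, Nat.gcd_mul_right]
      have : Nat.gcd (Nat.fib n) (Nat.fib (n+2)) = 1 := gcd_fib_add_two n ho
      rw [this, one_mul]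
    rw [e1, hdn, hdn1]
end

section
/- Define aₙ = F(2n−1) + 1 for n ≥ 1 and a₀ = 2, where F is the Fibonacci sequence. Then for all n ≥ 1: (a₂ₙ + a₂ₙ₊₁) / gcd(a₂ₙ, a₂ₙ₊₁)² = 1 and (a₂ₙ₋₁ + a₂ₙ) / gcd(a₂ₙ₋₁, a₂ₙ)² = 5; equivalently, a₂ₙ + a₂ₙ₊₁ = gcd(a₂ₙ, a₂ₙ₊₁)² and a₂ₙ₋₁ + a₂ₙ = 5·gcd(a₂ₙ₋₁, a₂ₙ)². -/
open Nat

private def luc : ℕ → ℕ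
  | 0 => 2
  | 1 => 1
  | n+2 => luc n + luc (n+1)

lemma luc_add_two (n : ℕ) : luc (n+2) = luc n + luc (n+1) := rfl

lemma luc_eq (n : ℕ) : luc (n+1) = fib n + fib (n+2) := by
  induction n using Nat.twoStepInduction with
  | zero => rfl
  | one => rfl
  | more n h1 h2 =>
    rw [luc_add_two, h1, h2]
    have e1 := fib_add_two (n := n)
    have e2 := fib_add_two (n := n+1)
    have e3 := fib_add_two (n := n+2)
    ring_nf at *
    omega

lemma luc_pos (n : ℕ) : 0 < luc n := by
  cases n with
  | zero => decide
  | succ m => rw [luc_eq]; have := fib_pos.2 (show 0 < m + 2 by omega); omega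

lemma luc_gcd_succ (n : ℕ) : Nat.gcd (luc n) (luc (n+1)) = 1 := by
  induction n with
  | zero => decide
  | succ m ih => rw [luc_add_two, gcd_add_self_right, gcd_comm]; exact ih

lemma luc_gcd_two (n : ℕ) : Nat.gcd (luc n) (luc (n+2)) = 1 := by
  rw [luc_add_two, add_comm, gcd_add_self_right]; exact luc_gcd_succ n

lemma luc_add_luc (n : ℕ) : luc n + luc (n+2) = 5 * fib (n+1) := by
  cases n with
  | zero => decide
  | succ m =>
    rw [luc_eq, luc_eq]
    have h1 := fib_add_two (n := m)
    have h2 := fib_add_two (n := m+1)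
    have h3 := fib_add_two (n := m+2)
    ring_nf at *
    omega

lemma cassini_s16 (m : ℕ) : fib (2*m) * fib (2*m+2) + 1 = fib (2*m+1)^2 ∧
    fib (2*m+1) * fib (2*m+3) = fib (2*m+2)^2 + 1 := by
  induction m with
  | zero => decide
  | succ k ih =>
    obtain ⟨h1, h2⟩ := ih
    have e1 := fib_add_two (n := 2*k)
    have e2 := fib_add_two (n := 2*k+1)
    have e3 := fib_add_two (n := 2*k+2)
    have e4 := fib_add_two (n := 2*k+3)
    ring_nf at *
    constructor <;> nlinarith [e1, e2, e3, e4, h1, h2]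

lemma fac2 (m : ℕ) : fib (4*m+3) + 1 = fib (2*m+1) * luc (2*m+2) := by
  have h := fib_add (2*m+1) (2*m+1)
  have hl := luc_eq (2*m+1)
  have hc := (cassini_s16 m).2
  ring_nf at *
  nlinarith [h, hl, hc]

lemma fac3 (m : ℕ) : fib (4*m+5) + 1 = fib (2*m+3) * luc (2*m+2) := by
  have h := fib_add (2*m+1) (2*m+3)
  have hl := luc_eq (2*m+1)
  have hc := (cassini_s16 (m+1)).1
  ring_nf at *
  nlinarith [h, hl, hc]

lemma fac1 (m : ℕ) : fib (4*m+1) + 1 = fib (2*m+1) * luc (2*m) := by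
  cases m with
  | zero => decide
  | succ k =>
    have h := fac3 k
    ring_nf at *
    exact h

lemma fib_gcd_odd (m : ℕ) : Nat.gcd (fib (2*m+1)) (fib (2*m+3)) = 1 := by
  rw [← fib_gcd]
  have h1 : (2*m+3) = 2 + (2*m+1) := by ring
  have h2 : Nat.gcd (2*m+1) (2*m+3) = 1 := by
    rw [h1, gcd_add_self_right, Nat.gcd_comm]
    simp [Nat.gcd]
  rw [h2, fib_one]

theorem normalized_sum_k3 (a : ℕ → ℕ) (h0 : a 0 = 2)
    (hn : ∀ n, 1 ≤ n → a n = Nat.fib (2 * n - 1) + 1) :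
    ∀ n, 1 ≤ n →
      a (2 * n) + a (2 * n + 1) = Nat.gcd (a (2 * n)) (a (2 * n + 1)) ^ 2 ∧
      a (2 * n - 1) + a (2 * n) = 5 * Nat.gcd (a (2 * n - 1)) (a (2 * n)) ^ 2 ∧
      (a (2 * n) + a (2 * n + 1)) / Nat.gcd (a (2 * n)) (a (2 * n + 1)) ^ 2 = 1 ∧
      (a (2 * n - 1) + a (2 * n)) / Nat.gcd (a (2 * n - 1)) (a (2 * n)) ^ 2 = 5 := by
  intro n hn1
  obtain ⟨m, rfl⟩ : ∃ m, n = m + 1 := ⟨n - 1, by omega⟩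
  have ha1 : a (2 * (m+1) - 1) = fib (2*m+1) * luc (2*m) := by
    rw [hn _ (by omega), show 2 * (2 * (m+1) - 1) - 1 = 4*m+1 by omega, fac1]
  have ha2 : a (2 * (m+1)) = fib (2*m+1) * luc (2*m+2) := by
    rw [hn _ (by omega), show 2 * (2 * (m+1)) - 1 = 4*m+3 by omega, fac2]
  have ha3 : a (2 * (m+1) + 1) = fib (2*m+3) * luc (2*m+2) := by
    rw [hn _ (by omega), show 2 * (2 * (m+1) + 1) - 1 = 4*m+5 by omega, fac3]
  rw [ha1, ha2, ha3]
  have hg1 : Nat.gcd (fib (2*m+1) * luc (2*m+2)) (fib (2*m+3) * luc (2*m+2))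
      = luc (2*m+2) := by
    rw [Nat.gcd_mul_right, fib_gcd_odd, one_mul]
  have hg2 : Nat.gcd (fib (2*m+1) * luc (2*m)) (fib (2*m+1) * luc (2*m+2))
      = fib (2*m+1) := by
    rw [Nat.gcd_mul_left, luc_gcd_two, mul_one]
  have hs1 : fib (2*m+1) * luc (2*m+2) + fib (2*m+3) * luc (2*m+2)
      = luc (2*m+2) ^ 2 := by
    rw [← add_mul, ← luc_eq]; ring
  have hs2 : fib (2*m+1) * luc (2*m) + fib (2*m+1) * luc (2*m+2)
      = 5 * fib (2*m+1) ^ 2 := by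
    rw [← mul_add, luc_add_luc]; ring
  have hp1 : 0 < luc (2*m+2) ^ 2 := pow_pos (luc_pos _) 2
  have hp2 : 0 < fib (2*m+1) ^ 2 := pow_pos (fib_pos.2 (by omega)) 2
  refine ⟨by rw [hg1, hs1], by rw [hg2, hs2], ?_, ?_⟩
  · rw [hg1, hs1, Nat.div_self hp1]
  · rw [hg2, hs2, Nat.mul_div_cancel _ hp2]
end
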